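/- Let δ > 0 and F₂ as above. Then the map s ↦ F₂'(s)/s is nondecreasing on (0, ∞) and strictly increasing on (δ, ∞). -/

import Mathlib

noncomputable def F₂' (δ : ℝ) (s : ℝ) : ℝ :=
  if |s| < δ then 0
  else s * Real.log (s^2 / δ^2) + 2 * δ * Real.sign s - 2 * s

/-! For `s ≥ δ` the quotient `F₂' δ s / s` equals `2 (log s + δ / s) - 2 log δ - 2`, and
`t ↦ log t + δ / t` is strictly increasing on `[δ, ∞)` because
`log (b / a) > 1 - a / b ≥ δ / a - δ / b` for `δ ≤ a < b`. On `(0, δ]` the quotient vanishes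
(also at `s = δ`), so the two pieces glue to a monotone function on `(0, ∞)`. -/

open Real Set

theorem strictMonoOn_log_add_div {c : ℝ} (hc : 0 < c) :
    StrictMonoOn (fun t => log t + c / t) (Ici c) := by
  intro a ha b hb hab
  have ha₀ : 0 < a := hc.trans_le ha
  have hb₀ : 0 < b := ha₀.trans hab
  have hlog : 1 - a / b < log b - log a := by
    have := log_lt_sub_one_of_pos (div_pos ha₀ hb₀) (div_lt_one hb₀ |>.2 hab).ne
    rw [log_div ha₀.ne' hb₀.ne'] at this
    linarith
  have hdiv : c / a - c / b ≤ 1 - a / b := by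
    rw [div_sub_div _ _ ha₀.ne' hb₀.ne', one_sub_div hb₀.ne', div_le_div_iff₀ (by positivity) hb₀]
    nlinarith [mul_le_mul_of_nonneg_right ha (sub_pos.2 hab).le]
  simp only
  linarith

section

variable {δ : ℝ}

theorem F₂'_div_self_of_le (hδ : 0 < δ) {s : ℝ} (hs : δ ≤ s) :
    F₂' δ s / s = 2 * (log s + δ / s) - 2 * log δ - 2 := by
  have hs₀ : 0 < s := hδ.trans_le hs
  rw [F₂', if_neg (by rw [abs_of_pos hs₀]; exact hs.not_gt), sign_of_pos hs₀,
    log_div (by positivity) (by positivity), log_pow, log_pow]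
  field_simp
  push_cast
  ring

theorem F₂'_div_self_eq_zero {s : ℝ} (hs : s ∈ Ioc 0 δ) : F₂' δ s / s = 0 := by
  obtain ⟨hs₀, hsδ⟩ := hs
  rcases hsδ.lt_or_eq with hlt | rfl
  · rw [F₂', if_pos (by rwa [abs_of_pos hs₀]), zero_div]
  · rw [F₂', if_neg (by rw [abs_of_pos hs₀]; exact lt_irrefl s), sign_of_pos hs₀,
      div_self (by positivity), log_one]
    ring

end

theorem stmt_6 (δ : ℝ) (hδ : 0 < δ) :
    MonotoneOn (fun s => F₂' δ s / s) (Set.Ioi (0:ℝ)) ∧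
      StrictMonoOn (fun s => F₂' δ s / s) (Set.Ioi δ) := by
  have hstrict : StrictMonoOn (fun s => F₂' δ s / s) (Ici δ) := by
    intro a ha b hb hab
    simp only [F₂'_div_self_of_le hδ ha, F₂'_div_self_of_le hδ hb]
    linarith [strictMonoOn_log_add_div hδ ha hb hab]
  have hzero : MonotoneOn (fun s => F₂' δ s / s) (Ioc 0 δ) := fun a ha b hb _ => by
    simp only [F₂'_div_self_eq_zero ha, F₂'_div_self_eq_zero hb, le_refl]
  refine ⟨?_, hstrict.mono Ioi_subset_Ici_self⟩
  rw [← Ioc_union_Ici_eq_Ioi hδ]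
  exact hzero.union_right hstrict.monotoneOn (isGreatest_Ioc hδ) isLeast_Ici
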